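/- For the 3-globular operad W₃ for tricategories: the first slice is the plain operad for pointed magmas (the free symmetric operad on one arity-0 generator i₁ and one arity-2 generator h₁, with no relations), and the second slice is the plain operad for 7-pointed double magmas (the free symmetric operad on seven arity-0 generators i₂, l₂, l₂′, r₂, r₂′, a₂, a₂′ and two arity-2 generators h₂, v₂, with no relations). -/

import Mathlib

universe u

/-- The canonical (order-preserving) equivalence between a sigma type of `Fin`s
and `Fin` of the sum: it realises the "standard" concatenation order. -/
noncomputable def finSigma {m : ℕ} (k : Fin m → ℕ) :
    (Σ i, Fin (k i)) ≃ Fin (∑ i, k i) :=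
  letI : Fintype (Σₗ i, Fin (k i)) := inferInstanceAs (Fintype (Σ i, Fin (k i)))
  (toLex : (Σ i, Fin (k i)) ≃ (Σₗ i, Fin (k i))).trans
    (Fintype.orderIsoFinOfCardEq (Σₗ i, Fin (k i))
      (by exact (Fintype.card_sigma).trans (by simp))).symm.toEquiv

/-- The block-sum permutation `t₁ ⊕ ⋯ ⊕ t_m` of `Fin (∑ i, k i)`. -/
noncomputable def blockSumPerm {m : ℕ} (k : Fin m → ℕ)
    (t : ∀ i, Equiv.Perm (Fin (k i))) : Equiv.Perm (Fin (∑ i, k i)) :=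
  ((finSigma k).symm.trans (Equiv.sigmaCongrRight t)).trans (finSigma k)

/-- The block permutation of `Fin (∑ i, k i)` induced by a permutation `t` of the blocks. -/
noncomputable def blockPerm {m : ℕ} (k : Fin m → ℕ) (t : Equiv.Perm (Fin m)) :
    Equiv.Perm (Fin (∑ i, k i)) :=
  ((finCongr (Equiv.sum_comp t k)).symm.trans
    ((finSigma fun i => k (t i)).symm.trans
      ((Equiv.sigmaCongrLeft (β := fun i => Fin (k i)) t).trans (finSigma k))))

/-- A plain (non-symmetric) operad: a monoid in strongly analytic endofunctors of `Set`,
presented concretely by a family of sets of operations indexed by arity, an identity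
operation, and composition, satisfying associativity and unit laws. -/
structure PlainOperad : Type (u + 1) where
  ops : ℕ → Type u
  unit : ops 1
  comp : ∀ {m : ℕ}, ops m → ∀ k : Fin m → ℕ, (∀ i, ops (k i)) → ops (∑ i, k i)
  comp_unit : ∀ {m : ℕ} (ρ : ops m), HEq (comp ρ (fun _ => 1) fun _ => unit) ρ
  unit_comp : ∀ {n : ℕ} (ρ : ops n), HEq (comp unit (fun _ => n) fun _ => ρ) ρ
  comp_assoc : ∀ {m : ℕ} (ρ : ops m) (k : Fin m → ℕ) (f : ∀ i, ops (k i))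
      (l : (Σ i : Fin m, Fin (k i)) → ℕ) (g : ∀ p, ops (l p)),
      HEq (comp (comp ρ k f) (fun j => l ((finSigma k).symm j))
            (fun j => g ((finSigma k).symm j)))
          (comp ρ (fun i => ∑ j : Fin (k i), l ⟨i, j⟩)
            (fun i => comp (f i) (fun j => l ⟨i, j⟩) (fun j => g ⟨i, j⟩)))

/-- A symmetric operad: a monoid in analytic endofunctors of `Set`, presented concretely:
a plain operad structure together with symmetric group actions satisfying the two
equivariance axioms. -/
structure SymmetricOperad : Type (u + 1) where
  ops : ℕ → Type u
  unit : ops 1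
  comp : ∀ {m : ℕ}, ops m → ∀ k : Fin m → ℕ, (∀ i, ops (k i)) → ops (∑ i, k i)
  act : ∀ {n : ℕ}, Equiv.Perm (Fin n) → ops n → ops n
  act_one : ∀ {n : ℕ} (ρ : ops n), act 1 ρ = ρ
  act_mul : ∀ {n : ℕ} (s t : Equiv.Perm (Fin n)) (ρ : ops n),
      act (s * t) ρ = act s (act t ρ)
  comp_unit : ∀ {m : ℕ} (ρ : ops m), HEq (comp ρ (fun _ => 1) fun _ => unit) ρ
  unit_comp : ∀ {n : ℕ} (ρ : ops n), HEq (comp unit (fun _ => n) fun _ => ρ) ρ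
  comp_assoc : ∀ {m : ℕ} (ρ : ops m) (k : Fin m → ℕ) (f : ∀ i, ops (k i))
      (l : (Σ i : Fin m, Fin (k i)) → ℕ) (g : ∀ p, ops (l p)),
      HEq (comp (comp ρ k f) (fun j => l ((finSigma k).symm j))
            (fun j => g ((finSigma k).symm j)))
          (comp ρ (fun i => ∑ j : Fin (k i), l ⟨i, j⟩)
            (fun i => comp (f i) (fun j => l ⟨i, j⟩) (fun j => g ⟨i, j⟩)))
  act_comp : ∀ {m : ℕ} (ρ : ops m) (k : Fin m → ℕ) (f : ∀ i, ops (k i))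
      (t : ∀ i, Equiv.Perm (Fin (k i))),
      comp ρ k (fun i => act (t i) (f i)) = act (blockSumPerm k t) (comp ρ k f)
  comp_act : ∀ {m : ℕ} (t : Equiv.Perm (Fin m)) (ρ : ops m) (k : Fin m → ℕ)
      (f : ∀ i, ops (k i)),
      HEq (comp (act t ρ) (fun i => k (t i)) (fun i => f (t i)))
          (act (blockPerm k t) (comp ρ k f))

/-- Forget the symmetric group actions of a symmetric operad. -/
def SymmetricOperad.toPlain (A : SymmetricOperad.{u}) : PlainOperad.{u} where
  ops := A.ops
  unit := A.unit
  comp := A.comp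
  comp_unit := A.comp_unit
  unit_comp := A.unit_comp
  comp_assoc := A.comp_assoc

/-- Morphisms of plain operads. -/
structure PlainOperad.Hom (P Q : PlainOperad.{u}) : Type u where
  app : ∀ n, P.ops n → Q.ops n
  app_unit : app 1 P.unit = Q.unit
  app_comp : ∀ {m : ℕ} (ρ : P.ops m) (k : Fin m → ℕ) (f : ∀ i, P.ops (k i)),
      app _ (P.comp ρ k f) = Q.comp (app m ρ) k fun i => app _ (f i)

/-- Morphisms of symmetric operads. -/
structure SymmetricOperad.Hom (A B : SymmetricOperad.{u}) : Type u where
  app : ∀ n, A.ops n → B.ops n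
  app_unit : app 1 A.unit = B.unit
  app_comp : ∀ {m : ℕ} (ρ : A.ops m) (k : Fin m → ℕ) (f : ∀ i, A.ops (k i)),
      app _ (A.comp ρ k f) = B.comp (app m ρ) k fun i => app _ (f i)
  app_act : ∀ {n : ℕ} (t : Equiv.Perm (Fin n)) (ρ : A.ops n),
      app n (A.act t ρ) = B.act t (app n ρ)

/-- `A` is (isomorphic to) the symmetrisation of the plain operad `P`: the universal
property of the left adjoint of the forgetful functor `SymmOp ⥤ PlainOp`. -/
def IsSymmetrisation (A : SymmetricOperad.{u}) (P : PlainOperad.{u}) : Prop :=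
  ∃ ι : P.Hom A.toPlain, ∀ (B : SymmetricOperad.{u}) (g : P.Hom B.toPlain),
    ∃! h : A.Hom B, ∀ (n : ℕ) (ρ : P.ops n), h.app n (ι.app n ρ) = g.app n ρ

/-- The free plain operad on a collection `ar : J → ℕ`: planar trees with
nodes labelled by elements of `J`. -/
inductive FreePlain (J : Type u) (ar : J → ℕ) : ℕ → Type u
  | leaf : FreePlain J ar 1
  | node (x : J) (k : Fin (ar x) → ℕ) (c : ∀ i, FreePlain J ar (k i)) :
      FreePlain J ar (∑ i, k i)

namespace FreePlain

variable {J : Type u} {ar : J → ℕ}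

/-- Transport a tree along an equality of arities. -/
def cast {m n : ℕ} (h : m = n) (t : FreePlain J ar m) : FreePlain J ar n := h ▸ t

/-- Interpret a free-operad element (a tree) in a plain operad, given an
interpretation of the generators. -/
def eval (P : PlainOperad.{u}) (ι : ∀ x : J, P.ops (ar x)) :
    ∀ {n : ℕ}, FreePlain J ar n → P.ops n
  | _, .leaf => P.unit
  | _, .node x k c => P.comp (ι x) k fun i => eval P ι (c i)

/-- A generator, as a tree of height one. -/
def of (x : J) : FreePlain J ar (ar x) :=
  cast (by simp) (node x (fun _ => 1) fun _ => leaf)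

/-- A nullary generator, as a tree. -/
def of0 (x : J) (h : ar x = 0) : FreePlain J ar 0 :=
  cast (h ▸ rfl : ar x = 0) (of x)

/-- Pairing for dependent functions out of `Fin 2`. -/
def pairFun {α : Fin 2 → Sort*} (a : α 0) (b : α 1) : ∀ i, α i
  | ⟨0, _⟩ => a
  | ⟨1, _⟩ => b

/-- A binary generator applied to two trees. -/
def of2 (x : J) (h : ar x = 2) {p q : ℕ}
    (a : FreePlain J ar p) (b : FreePlain J ar q) : FreePlain J ar (p + q) :=
  cast (by
      have e : ∑ i : Fin (ar x), ![p, q] (Fin.cast h i) = ∑ j : Fin 2, ![p, q] j :=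
        Fintype.sum_equiv (finCongr h) _ _ fun i => rfl
      rw [e]; simp [Fin.sum_univ_two])
    (node x (fun i => ![p, q] (Fin.cast h i))
      (fun i => pairFun (α := fun j : Fin 2 => FreePlain J ar (![p, q] j)) a b (Fin.cast h i)))

end FreePlain

/-- A presentation for a symmetric operad: generators `J` with arities `ar`, and
relations indexed by `R`, each being a parallel pair of elements of the underlying
collection `Σ n, Sₙ × J^∞[n]` of the free symmetric operad on `(J, ar)`. -/
structure SymmPresentation (J : Type u) (ar : J → ℕ) : Type (u + 1) where
  R : Type u
  relN : R → ℕ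
  lhsPerm : ∀ r, Equiv.Perm (Fin (relN r))
  lhsTree : ∀ r, FreePlain J ar (relN r)
  rhsPerm : ∀ r, Equiv.Perm (Fin (relN r))
  rhsTree : ∀ r, FreePlain J ar (relN r)

/-- A symmetric operad `A`, with an interpretation `ι` of the generators, satisfies a
presentation if the two sides of every relation become equal in `A`. -/
def SymmetricOperad.Satisfies (A : SymmetricOperad.{u}) {J : Type u} {ar : J → ℕ}
    (ι : ∀ x : J, A.ops (ar x)) (P : SymmPresentation J ar) : Prop :=
  ∀ r : P.R, A.act (P.lhsPerm r) ((P.lhsTree r).eval A.toPlain ι)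
    = A.act (P.rhsPerm r) ((P.rhsTree r).eval A.toPlain ι)

/-- `A` is presented by `P` (via the interpretation `ι` of generators): `A` satisfies the
relations, and it is universal with that property; this is the universal property of the
coequaliser `F(R) ⇉ F(J) → A` in the category of symmetric operads. -/
def SymmetricOperad.IsPresentedBy (A : SymmetricOperad.{u}) {J : Type u} {ar : J → ℕ}
    (ι : ∀ x : J, A.ops (ar x)) (P : SymmPresentation J ar) : Prop :=
  A.Satisfies ι P ∧
    ∀ (B : SymmetricOperad.{u}) (κ : ∀ x : J, B.ops (ar x)), B.Satisfies κ P →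
      ∃! h : A.Hom B, ∀ x : J, h.app _ (ι x) = κ x

/-- `A` is the free symmetric operad on the collection `(J, ar)`, via `ι`. -/
def SymmetricOperad.IsFreeOn (A : SymmetricOperad.{u}) {J : Type u} {ar : J → ℕ}
    (ι : ∀ x : J, A.ops (ar x)) : Prop :=
  ∀ (B : SymmetricOperad.{u}) (κ : ∀ x : J, B.ops (ar x)),
    ∃! h : A.Hom B, ∀ x : J, h.app _ (ι x) = κ x

/-- `P` is the free plain operad on the collection `(J, ar)`, via `ι`. -/
def PlainOperad.IsFreeOn (P : PlainOperad.{u}) {J : Type u} {ar : J → ℕ}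
    (ι : ∀ x : J, P.ops (ar x)) : Prop :=
  ∀ (Q : PlainOperad.{u}) (κ : ∀ x : J, Q.ops (ar x)),
    ∃! h : P.Hom Q, ∀ x : J, h.app _ (ι x) = κ x

/-- An algebra for a symmetric operad on a set `X`. -/
structure SymmetricOperad.Algebra (A : SymmetricOperad.{u}) (X : Type u) : Type u where
  run : ∀ n, A.ops n → (Fin n → X) → X
  run_unit : ∀ x : X, run 1 A.unit (fun _ => x) = x
  run_comp : ∀ {m : ℕ} (ρ : A.ops m) (k : Fin m → ℕ) (f : ∀ i, A.ops (k i))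
      (xs : Fin (∑ i, k i) → X),
      run _ (A.comp ρ k f) xs
        = run m ρ fun i => run (k i) (f i) fun j => xs (finSigma k ⟨i, j⟩)
  run_act : ∀ {n : ℕ} (t : Equiv.Perm (Fin n)) (ρ : A.ops n) (xs : Fin n → X),
      run n (A.act t ρ) xs = run n ρ fun i => xs (t.symm i)

/-- An algebra for a plain operad on a set `X`. -/
structure PlainOperad.Algebra (P : PlainOperad.{u}) (X : Type u) : Type u where
  run : ∀ n, P.ops n → (Fin n → X) → X
  run_unit : ∀ x : X, run 1 P.unit (fun _ => x) = x
  run_comp : ∀ {m : ℕ} (ρ : P.ops m) (k : Fin m → ℕ) (f : ∀ i, P.ops (k i))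
      (xs : Fin (∑ i, k i) → X),
      run _ (P.comp ρ k f) xs
        = run m ρ fun i => run (k i) (f i) fun j => xs (finSigma k ⟨i, j⟩)

/-- The underlying object of the monad on `Set` associated to a symmetric operad:
`A(X) = Σ_{n≥0} Xⁿ ×_{Sₙ} A[n]`. -/
def SymmetricOperad.MonadObj (A : SymmetricOperad.{u}) (X : Type u) : Type u :=
  Σ n : ℕ, Quot (fun p q : A.ops n × (Fin n → X) =>
    ∃ t : Equiv.Perm (Fin n), q.1 = A.act t p.1 ∧ q.2 = fun i => p.2 (t.symm i))

/-- The 1-cell generators of the presentation of the 3-globular operad `W₃` for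
tricategories: `i1` (identity 1-cells, arity 0 in the slice) and `h1` (binary
composition of 1-cells, arity 2). -/
inductive W3Gen1 : Type u
  | i1 | h1

/-- Arities of the 1-dimensional generators. -/
def W3Ar1 : W3Gen1.{u} → ℕ
  | .i1 => 0
  | .h1 => 2

/-- The 2-cell generators of the presentation of `W₃`: the identity generator `i2`, the
unit and associativity coherence generators `l2, l2', r2, r2', a2, a2'` (all of arity 0
in the slice), and the horizontal and vertical compositions `h2, v2` (arity 2). -/
inductive W3Gen2 : Type u
  | i2 | l2 | l2' | r2 | r2' | a2 | a2' | h2 | v2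

/-- Arities of the 2-dimensional generators. -/
def W3Ar2 : W3Gen2.{u} → ℕ
  | .h2 => 2
  | .v2 => 2
  | _ => 0

/-- The first slice presentation of `W₃`: no relations. -/
def W3Pres1 : SymmPresentation W3Gen1.{u} W3Ar1 where
  R := PEmpty
  relN := fun r => r.elim
  lhsPerm := fun r => r.elim
  lhsTree := fun r => r.elim
  rhsPerm := fun r => r.elim
  rhsTree := fun r => r.elim

/-- The second slice presentation of `W₃`: no relations. -/
def W3Pres2 : SymmPresentation W3Gen2.{u} W3Ar2 where
  R := PEmpty
  relN := fun r => r.elim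
  lhsPerm := fun r => r.elim
  lhsTree := fun r => r.elim
  rhsPerm := fun r => r.elim
  rhsTree := fun r => r.elim


/-! ### Auxiliary development -/

section
variable {m : ℕ} (k : Fin m → ℕ)

theorem finSigma_lt_iff (p q : Σ i, Fin (k i)) :
    finSigma k p < finSigma k q ↔ toLex p < toLex q := by
  unfold finSigma
  simp only [Equiv.trans_apply, RelIso.coe_fn_toEquiv]
  rw [OrderIso.lt_iff_lt]

end
section
variable {m : ℕ} {k : Fin m → ℕ}

theorem eq_finSigma (E : (Σ i, Fin (k i)) → Fin (∑ i, k i))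
    (hmono : ∀ p q : Σ i, Fin (k i), toLex p < toLex q → E p < E q)
    (hsurj : Function.Surjective E) (p : Σ i, Fin (k i)) : E p = finSigma k p := by
  have hE : StrictMono (fun p : Σₗ i, Fin (k i) => E (ofLex p)) := fun p q h => hmono _ _ h
  have hF : StrictMono (fun p : Σₗ i, Fin (k i) => finSigma k (ofLex p)) := by
    intro p q h
    exact (finSigma_lt_iff k _ _).2 h
  have hFs : Function.Surjective (fun p : Σₗ i, Fin (k i) => finSigma k (ofLex p)) :=
    fun q => ⟨toLex ((finSigma k).symm q), by simp⟩
  have := Subsingleton.elim (hE.orderIsoOfSurjective _ (fun q => hsurj q))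
    (hF.orderIsoOfSurjective _ hFs)
  have := congrArg (fun (f : (Σₗ i, Fin (k i)) ≃o Fin (∑ i, k i)) => f (toLex p)) this
  exact this

end
section
variable {m : ℕ} (k : Fin m → ℕ)

/-- offset -/
def fOff (i : Fin m) : ℕ := ∑ i' ∈ Finset.univ.filter (· < i), k i'

theorem fOff_add_le {i i' : Fin m} (h : i < i') : fOff k i + k i ≤ fOff k i' := by
  have hsub : insert i (Finset.univ.filter (· < i)) ⊆ Finset.univ.filter (· < i') := by
    intro q hq
    simp only [Finset.mem_insert, Finset.mem_filter, Finset.mem_univ, true_and] at hq ⊢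
    rcases hq with rfl | hq
    · exact h
    · exact hq.trans h
  calc fOff k i + k i = ∑ q ∈ insert i (Finset.univ.filter (· < i)), k q := by
        rw [Finset.sum_insert (by simp), add_comm]; rfl
    _ ≤ _ := Finset.sum_le_sum_of_subset hsub

theorem fOff_add_lt (i : Fin m) (j : Fin (k i)) : fOff k i + (j : ℕ) < ∑ i', k i' := by
  have : fOff k i + k i ≤ ∑ i', k i' := by
    calc fOff k i + k i = ∑ q ∈ insert i (Finset.univ.filter (· < i)), k q := by
          rw [Finset.sum_insert (by simp), add_comm]; rfl
      _ ≤ _ := Finset.sum_le_sum_of_subset (Finset.subset_univ _)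
  have hj := j.isLt
  omega
  
theorem finSigma_val (p : Σ i, Fin (k i)) :
    ((finSigma k p : Fin (∑ i, k i)) : ℕ) = fOff k p.1 + p.2 := by
  have key : ∀ q : Σ i, Fin (k i),
      (⟨fOff k q.1 + q.2, fOff_add_lt k q.1 q.2⟩ : Fin (∑ i, k i)) = finSigma k q := by
    apply eq_finSigma
    · rintro ⟨a, x⟩ ⟨b, y⟩ h
      rw [Sigma.Lex.lt_def] at h
      simp only [Fin.mk_lt_mk]
      obtain h | ⟨h, h2⟩ := h
      · have := fOff_add_le k (show a < b from h)
        have := x.isLt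
        omega
      · obtain rfl : a = b := h
        have : (x : ℕ) < (y : ℕ) := h2
        omega
    · intro q
      -- injective on a fintype of the same card
      have hinj : Function.Injective
          (fun p : Σ i, Fin (k i) => (⟨fOff k p.1 + p.2, fOff_add_lt k p.1 p.2⟩ : Fin (∑ i, k i))) := by
        rintro ⟨a, x⟩ ⟨b, y⟩ h
        simp only [Fin.mk.injEq] at h
        rcases lt_trichotomy a b with hab | rfl | hab
        · have := fOff_add_le k hab; have := x.isLt; omega
        · have : (x : ℕ) = y := by omega
          simp [Fin.ext_iff, this]
        · have := fOff_add_le k hab; have := y.isLt; omega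
      have hbij := (Fintype.bijective_iff_injective_and_card _).2 ⟨hinj, by simp⟩
      exact hbij.2 q
  rw [← key p]
theorem sum_lt_finSigma (w : Fin (∑ i, k i) → ℕ) (i : Fin m) (j : Fin (k i)) :
    ∑ q ∈ Finset.univ.filter (· < finSigma k ⟨i, j⟩), w q
      = (∑ i' ∈ Finset.univ.filter (· < i), ∑ j' : Fin (k i'), w (finSigma k ⟨i', j'⟩))
        + ∑ j'' ∈ Finset.univ.filter (· < j), w (finSigma k ⟨i, j''⟩) := by
  classical
  rw [Finset.sum_filter]
  rw [← Equiv.sum_comp (finSigma k)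
    (fun q => if q < finSigma k ⟨i, j⟩ then w q else 0)]
  rw [← Finset.univ_sigma_univ, Finset.sum_sigma]
  have hrow : ∀ i' : Fin m,
      (∑ x : Fin (k i'), if finSigma k ⟨i', x⟩ < finSigma k ⟨i, j⟩ then w (finSigma k ⟨i', x⟩) else 0)
        = (if i' < i then ∑ x : Fin (k i'), w (finSigma k ⟨i', x⟩) else 0)
          + (if i' = i then ∑ j'' ∈ Finset.univ.filter (· < j), w (finSigma k ⟨i, j''⟩) else 0) := by
    intro i'
    rcases lt_trichotomy i' i with h | rfl | h
    · rw [if_pos h, if_neg h.ne, add_zero]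
      apply Finset.sum_congr rfl
      intro x _
      rw [if_pos]
      rw [Fin.lt_def, finSigma_val, finSigma_val]
      have h1 := fOff_add_le k h
      have h2 := x.isLt
      simp only
      omega
    · rw [if_neg (lt_irrefl _), if_pos rfl, zero_add, Finset.sum_filter]
      apply Finset.sum_congr rfl
      intro x _
      congr 1
      rw [Fin.lt_def, finSigma_val, finSigma_val, Fin.lt_def]
      simp only [eq_iff_iff]
      omega
    · rw [if_neg (asymm h), if_neg h.ne', add_zero]
      apply Finset.sum_eq_zero
      intro x _
      rw [if_neg]
      rw [Fin.lt_def, finSigma_val, finSigma_val]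
      have h1 := fOff_add_le k h
      have h2 := j.isLt
      simp only
      omega
  rw [Finset.sum_congr rfl (fun i' _ => hrow i')]
  rw [Finset.sum_add_distrib, Finset.sum_ite_eq' Finset.univ i]
  simp [Finset.sum_filter]
end

namespace W3aux

theorem finSigma_val' {m : ℕ} (k : Fin m → ℕ) (p : Σ i, Fin (k i)) :
    ((finSigma k p : Fin (∑ i, k i)) : ℕ)
      = (∑ i' ∈ Finset.univ.filter (· < p.1), k i') + p.2 :=
  finSigma_val k p

theorem filter_lt_card {m : ℕ} (i : Fin m) :
    (Finset.univ.filter (· < i)).card = i.val := by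
  have : Finset.univ.filter (· < i) = Finset.Iio i := by ext q; simp
  rw [this, Fin.card_Iio]

variable {J : Type u} {ar : J → ℕ}

inductive T (J : Type u) (ar : J → ℕ) : Type u
  | leaf : T J ar
  | node (x : J) (c : Fin (ar x) → T J ar) : T J ar

/-- number of leaves -/
def arity : T J ar → ℕ
  | .leaf => 1
  | .node _ c => ∑ i, arity (c i)

/-- graft trees onto the leaves -/
noncomputable def graft : (t : T J ar) → (Fin (arity t) → T J ar) → T J ar
  | .leaf, F => F ⟨0, Nat.one_pos⟩
  | .node x c, F => .node x fun i => graft (c i) fun j =>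
      F (finSigma (fun i => arity (c i)) ⟨i, j⟩)

theorem arity_graft (t : T J ar) (F : Fin (arity t) → T J ar) :
    arity (graft t F) = ∑ i, arity (F i) := by
  induction t with
  | leaf => exact (Fin.sum_univ_one fun i : Fin 1 => arity (F i)).symm
  | node x c ih =>
    show ∑ i, arity (graft (c i) fun j =>
        F (finSigma (fun i' => arity (c i')) ⟨i, j⟩)) = _
    rw [Finset.sum_congr rfl fun i _ => ih i _]
    refine Eq.trans ?_ (Equiv.sum_comp (finSigma fun i => arity (c i)) fun q => arity (F q))
    rw [← Finset.univ_sigma_univ, Finset.sum_sigma]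

theorem graft_leaf_fun (t : T J ar) : graft t (fun _ => .leaf) = t := by
  induction t with
  | leaf => rfl
  | node x c ih =>
    show T.node x _ = T.node x c
    congr 1
    funext i
    exact ih i

theorem finSigma_assoc {mm : ℕ} (kc : Fin mm → ℕ) (w : Fin (∑ i, kc i) → ℕ)
    (i : Fin mm) (j : Fin (kc i)) (x y j' : ℕ)
    (hx : x = ∑ i' ∈ Finset.univ.filter (· < i), ∑ j'' : Fin (kc i'), w (finSigma kc ⟨i', j''⟩))
    (hy : y = ∑ j'' ∈ Finset.univ.filter (· < j), w (finSigma kc ⟨i, j''⟩)) :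
    x + (y + j') = (∑ q ∈ Finset.univ.filter (· < finSigma kc ⟨i, j⟩), w q) + j' := by
  subst hx hy
  rw [sum_lt_finSigma]
  ring

theorem graft_graft : ∀ (t : T J ar) (F : Fin (arity t) → T J ar)
    (G : Fin (∑ i, arity (F i)) → T J ar),
    graft (graft t F) (fun j => G (Fin.cast (arity_graft t F) j))
      = graft t fun i => graft (F i) fun j =>
          G (finSigma (fun i => arity (F i)) ⟨i, j⟩) := by
  intro t
  induction t with
  | leaf =>
    intro F G
    show graft (F ⟨0, Nat.one_pos⟩) _ = graft (F ⟨0, Nat.one_pos⟩) _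
    congr 1
    funext j
    congr 1
    apply Fin.ext
    rw [Fin.coe_cast, finSigma_val']
    have he : Finset.univ.filter (· < (⟨0, Nat.one_pos⟩ : Fin (arity (T.leaf : T J ar)))) = ∅ := by
      apply Finset.filter_eq_empty_iff.2
      intro q _
      intro hq
      rw [Fin.lt_def] at hq
      simp at hq
    rw [he]
    simp
  | node x c ih =>
    intro F G
    simp only [graft]
    congr 1
    funext i
    have h1 : (fun j => G (Fin.cast (arity_graft (T.node x c) F) ((finSigma fun i' => arity (graft (c i') fun j' => F ((finSigma fun i' => arity (c i')) ⟨i', j'⟩))) ⟨i, j⟩)))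
        = fun j => (fun q : Fin (∑ j', arity (F ((finSigma fun i' => arity (c i')) ⟨i, j'⟩))) => G (Fin.cast (arity_graft (T.node x c) F) ((finSigma fun i' => arity (graft (c i') fun j' => F ((finSigma fun i' => arity (c i')) ⟨i', j'⟩))) ⟨i, Fin.cast (arity_graft (c i) (fun j' => F ((finSigma fun i' => arity (c i')) ⟨i, j'⟩))).symm q⟩))) (Fin.cast (arity_graft (c i) (fun j' => F ((finSigma fun i' => arity (c i')) ⟨i, j'⟩))) j) := by
      funext j
      exact congrArg G (Fin.ext rfl)
    refine (congrArg (graft _) h1).trans ?_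
    rw [ih i (fun j' => F ((finSigma fun i' => arity (c i')) ⟨i, j'⟩)) (fun q : Fin (∑ j', arity (F ((finSigma fun i' => arity (c i')) ⟨i, j'⟩))) => G (Fin.cast (arity_graft (T.node x c) F) ((finSigma fun i' => arity (graft (c i') fun j' => F ((finSigma fun i' => arity (c i')) ⟨i', j'⟩))) ⟨i, Fin.cast (arity_graft (c i) (fun j' => F ((finSigma fun i' => arity (c i')) ⟨i, j'⟩))).symm q⟩)))]
    congr 1
    funext j
    congr 1
    funext j'
    show G _ = G _
    congr 1
    apply Fin.ext
    simp only [Fin.coe_cast, finSigma_val']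
    erw [Fin.coe_cast, finSigma_val', Fin.coe_cast, finSigma_val']
    refine finSigma_assoc (fun i' => arity (c i')) (fun q => arity (F q)) i j _ _ _ ?_ ?_
    · exact Finset.sum_congr rfl fun i' _ => arity_graft (c i') _
    · rfl
    · exact (arity_graft (c i) _).symm
/-- congruence for `PlainOperad.comp`. -/
theorem comp_congr (Q : PlainOperad.{u}) {m : ℕ} (ρ : Q.ops m) {k k' : Fin m → ℕ}
    (hk : k = k') (f : ∀ i, Q.ops (k i)) (f' : ∀ i, Q.ops (k' i))
    (hf : ∀ i, HEq (f i) (f' i)) : HEq (Q.comp ρ k f) (Q.comp ρ k' f') := by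
  subst hk
  have : f = f' := funext fun i => eq_of_heq (hf i)
  rw [this]

theorem heq_sub {J : Type u} {ar : J → ℕ} {a b : ℕ} (h : a = b)
    {x : {t : T J ar // arity t = a}} {y : {t : T J ar // arity t = b}}
    (hxy : x.1 = y.1) : HEq x y := by
  subst h
  exact heq_of_eq (Subtype.ext hxy)

/-- The free plain operad on `(J, ar)`. -/
noncomputable def M (J : Type u) (ar : J → ℕ) : PlainOperad.{u} where
  ops n := {t : T J ar // arity t = n}
  unit := ⟨.leaf, rfl⟩
  comp ρ k f := ⟨graft ρ.1 (fun i => (f (Fin.cast ρ.2 i)).1), by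
    rw [arity_graft]
    exact Fintype.sum_equiv (finCongr ρ.2) _ _ fun i => by
      rw [(f (Fin.cast ρ.2 i)).2]; rfl⟩
  comp_unit := by
    rintro m ⟨t, rfl⟩
    exact heq_sub (by simp) (graft_leaf_fun t)
  unit_comp := by
    rintro n ⟨t, rfl⟩
    exact heq_sub (by simp) rfl
  comp_assoc := by
    rintro m ⟨t, rfl⟩ k f l g
    refine heq_sub ?_ ?_
    · rw [Equiv.sum_comp (finSigma k).symm l]
      rw [← Finset.univ_sigma_univ, Finset.sum_sigma]
    · have HS : (∑ i, arity (f i).1) = ∑ i : Fin (arity t), k i :=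
        Finset.sum_congr rfl fun i _ => (f i).2
      show graft (graft t (fun i => (f i).1))
            (fun q => (g ((finSigma k).symm (Fin.cast (by
              rw [arity_graft]; exact HS) q))).1)
          = graft t (fun i => graft ((f i).1)
              (fun j => (g ⟨i, Fin.cast ((f i).2) j⟩).1))
      have step1 : (fun q => (g ((finSigma k).symm (Fin.cast (by
              rw [arity_graft]; exact HS) q))).1)
          = fun q => (fun r : Fin (∑ i, arity (f i).1) =>
              (g ((finSigma k).symm (Fin.cast HS r))).1)
            (Fin.cast (arity_graft t (fun i => (f i).1)) q) := by
        funext q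
        apply congrArg (fun p => (g p).1)
        apply congrArg
        apply Fin.ext
        simp only [Fin.coe_cast]
      rw [step1, graft_graft t (fun i => (f i).1)
        (fun r : Fin (∑ i, arity (f i).1) => (g ((finSigma k).symm (Fin.cast HS r))).1)]
      congr 1
      funext i
      congr 1
      funext j
      apply congrArg (fun p => (g p).1)
      apply (Equiv.symm_apply_eq _).2
      apply Fin.ext
      simp only [Fin.coe_cast, finSigma_val']
      have : ∀ i' ∈ Finset.univ.filter (· < i), arity (f i').1 = k i' :=
        fun i' _ => (f i').2
      rw [Finset.sum_congr rfl this]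

/-- The generators inside `M`. -/
noncomputable def genM (J : Type u) (ar : J → ℕ) (x : J) : (M J ar).ops (ar x) :=
  ⟨.node x fun _ => .leaf, by
    show (∑ _i : Fin (ar x), arity (T.leaf : T J ar)) = ar x
    rw [show (∑ _i : Fin (ar x), arity (T.leaf : T J ar)) = ∑ _i : Fin (ar x), 1 from rfl]
    simp⟩

/-- Evaluation of trees in a plain operad. -/
noncomputable def evalT (Q : PlainOperad.{u}) (κ : ∀ x : J, Q.ops (ar x)) :
    (t : T J ar) → Q.ops (arity t)
  | .leaf => Q.unit
  | .node x c => Q.comp (κ x) (fun i => arity (c i)) fun i => evalT Q κ (c i)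

theorem evalT_graft (Q : PlainOperad.{u}) (κ : ∀ x : J, Q.ops (ar x)) :
    ∀ (t : T J ar) (F : Fin (arity t) → T J ar),
    HEq (evalT Q κ (graft t F))
      (Q.comp (evalT Q κ t) (fun i => arity (F i)) fun i => evalT Q κ (F i)) := by
  intro t
  induction t with
  | leaf =>
    intro F
    have hall : ∀ i : Fin (arity (T.leaf : T J ar)), i = ⟨0, Nat.one_pos⟩ := by
      intro i
      apply Fin.ext
      have h2 : (i : ℕ) < 1 := i.isLt
      show i.val = 0
      omega
    have hk : (fun _ : Fin (arity (T.leaf : T J ar)) => arity (F ⟨0, Nat.one_pos⟩))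
        = fun i => arity (F i) := funext fun i => by rw [hall i]
    have hf : ∀ i : Fin (arity (T.leaf : T J ar)),
        HEq (evalT Q κ (F ⟨0, Nat.one_pos⟩)) (evalT Q κ (F i)) := fun i => by rw [hall i]
    exact HEq.trans (Q.unit_comp (evalT Q κ (F ⟨0, Nat.one_pos⟩))).symm
      (comp_congr Q Q.unit hk _ _ hf)
  | node x c ih =>
    intro F
    have stepA : HEq (evalT Q κ (graft (T.node x c) F))
        (Q.comp (κ x) (fun i => ∑ j : Fin (arity (c i)),
            arity (F (finSigma (fun i' => arity (c i')) ⟨i, j⟩)))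
          fun i => Q.comp (evalT Q κ (c i))
            (fun j => arity (F (finSigma (fun i' => arity (c i')) ⟨i, j⟩)))
            fun j => evalT Q κ (F (finSigma (fun i' => arity (c i')) ⟨i, j⟩))) := by
      refine comp_congr Q (κ x) (funext fun i => arity_graft (c i) _) _ _ fun i => ?_
      exact ih i _
    have assoc := Q.comp_assoc (κ x) (fun i => arity (c i)) (fun i => evalT Q κ (c i))
      (fun p => arity (F (finSigma (fun i' => arity (c i')) p)))
      (fun p => evalT Q κ (F (finSigma (fun i' => arity (c i')) p)))
    have stepC : HEq
        (Q.comp (Q.comp (κ x) (fun i => arity (c i)) fun i => evalT Q κ (c i))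
          (fun j => arity (F (finSigma (fun i' => arity (c i'))
            ((finSigma fun i' => arity (c i')).symm j))))
          fun j => evalT Q κ (F (finSigma (fun i' => arity (c i'))
            ((finSigma fun i' => arity (c i')).symm j))))
        (Q.comp (Q.comp (κ x) (fun i => arity (c i)) fun i => evalT Q κ (c i))
          (fun i => arity (F i)) fun i => evalT Q κ (F i)) := by
      refine comp_congr Q _ (funext fun j => by rw [Equiv.apply_symm_apply]) _ _ fun j => by
        rw [Equiv.apply_symm_apply]
    exact stepA.trans (assoc.symm.trans stepC)

theorem plain_hom_ext {P Q : PlainOperad.{u}} {h₁ h₂ : P.Hom Q}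
    (H : ∀ n ρ, h₁.app n ρ = h₂.app n ρ) : h₁ = h₂ := by
  cases h₁
  cases h₂
  simp only [PlainOperad.Hom.mk.injEq]
  funext n ρ
  exact H n ρ

/-- Evaluation as a morphism of plain operads. -/
noncomputable def evalHom (Q : PlainOperad.{u}) (κ : ∀ x : J, Q.ops (ar x)) :
    (M J ar).Hom Q where
  app n ρ := ρ.2 ▸ evalT Q κ ρ.1
  app_unit := rfl
  app_comp := by
    rintro m ⟨t, rfl⟩ k f
    have hk : (fun i => arity ((f (Fin.cast (rfl : arity t = arity t) i)).1)) = k :=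
      funext fun i => ((f _).2).trans (congrArg k (Fin.ext (by simp [Fin.coe_cast])))
    have hf : ∀ i : Fin (arity t),
        HEq (evalT Q κ ((f (Fin.cast (rfl : arity t = arity t) i)).1))
          ((f i).2 ▸ evalT Q κ (f i).1) :=
      fun i => (eqRec_heq ((f i).2) (evalT Q κ (f i).1)).symm
    exact eq_of_heq ((eqRec_heq _ _).trans
      ((evalT_graft Q κ t _).trans (comp_congr Q (evalT Q κ t) hk _ _ hf)))

theorem evalHom_gen (Q : PlainOperad.{u}) (κ : ∀ x : J, Q.ops (ar x)) (x : J) :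
    (evalHom Q κ).app (ar x) (genM J ar x) = κ x := by
  apply eq_of_heq
  exact (eqRec_heq _ _).trans (Q.comp_unit (κ x))

theorem hom_unique (Q : PlainOperad.{u}) (h₁ h₂ : (M J ar).Hom Q)
    (H : ∀ x, h₁.app (ar x) (genM J ar x) = h₂.app (ar x) (genM J ar x)) : h₁ = h₂ := by
  apply plain_hom_ext
  suffices h : ∀ t : T J ar, h₁.app (arity t) ⟨t, rfl⟩ = h₂.app (arity t) ⟨t, rfl⟩ by
    rintro n ⟨t, rfl⟩
    exact h t
  intro t
  induction t with
  | leaf => exact h₁.app_unit.trans h₂.app_unit.symm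
  | node x c ih =>
    have key : (⟨T.node x c, rfl⟩ : {t : T J ar // arity t = arity (T.node x c)})
        = (M J ar).comp (genM J ar x) (fun i => arity (c i)) (fun i => ⟨c i, rfl⟩) := by
      apply Subtype.ext
      show T.node x c = graft (T.node x fun _ => T.leaf)
        (fun i => c (Fin.cast (genM J ar x).2 i))
      simp only [graft]
      congr 1
      funext i
      apply congrArg c
      apply Fin.ext
      show (i : ℕ) = ((finSigma (fun _ => arity (T.leaf : T J ar)) ⟨i, ⟨0, Nat.one_pos⟩⟩ : Fin _) : ℕ)
      rw [finSigma_val']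
      rw [show (∑ i' ∈ Finset.univ.filter (· < i), arity (T.leaf : T J ar))
        = ∑ _i' ∈ Finset.univ.filter (· < i), 1 from rfl]
      rw [Finset.sum_const, filter_lt_card]
      simp
    rw [key]
    refine (h₁.app_comp _ _ _).trans (Eq.trans ?_ (h₂.app_comp _ _ _).symm)
    rw [H x]
    congr 1
    funext i
    exact ih i

theorem M_isFreeOn (J : Type u) (ar : J → ℕ) : (M J ar).IsFreeOn (genM J ar) := by
  intro Q κ
  refine ⟨evalHom Q κ, fun x => evalHom_gen Q κ x, ?_⟩
  intro h hh
  exact hom_unique Q h (evalHom Q κ) fun x => (hh x).trans (evalHom_gen Q κ x).symm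

/-- Composite of a plain map into the underlying operad with a symmetric map. -/
def compHom {P : PlainOperad.{u}} {A B : SymmetricOperad.{u}}
    (ι₀ : P.Hom A.toPlain) (h : A.Hom B) : P.Hom B.toPlain where
  app n ρ := h.app n (ι₀.app n ρ)
  app_unit := by
    show h.app 1 (ι₀.app 1 P.unit) = B.unit
    rw [ι₀.app_unit]
    exact h.app_unit
  app_comp := by
    intro m ρ k f
    show h.app _ (ι₀.app _ (P.comp ρ k f))
      = B.comp (h.app m (ι₀.app m ρ)) k fun i => h.app _ (ι₀.app _ (f i))
    rw [ι₀.app_comp]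
    exact h.app_comp _ _ _

theorem isSymmetrisation_of_free {J : Type u} {ar : J → ℕ} (A : SymmetricOperad.{u})
    (ι : ∀ x : J, A.ops (ar x)) (hA : A.IsFreeOn ι) :
    IsSymmetrisation A (M J ar) := by
  obtain ⟨ι₀, hι₀, -⟩ := M_isFreeOn J ar A.toPlain ι
  refine ⟨ι₀, fun B g => ?_⟩
  obtain ⟨h, hh, hu⟩ := hA B fun x => g.app _ (genM J ar x)
  refine ⟨h, ?_, ?_⟩
  · intro n ρ
    have e1 : compHom ι₀ h = g := by
      apply hom_unique
      intro x
      show h.app _ (ι₀.app _ (genM J ar x)) = _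
      rw [hι₀ x, hh x]
    exact congrFun (congrFun (congrArg PlainOperad.Hom.app e1) n) ρ
  · intro h' hh'
    apply hu
    intro x
    have h3 := hh' (ar x) (genM J ar x)
    rw [hι₀ x] at h3
    exact h3

end W3aux


/-- **Statement 18.** For the 3-globular operad `W₃` for tricategories: the first slice
(presented by `W3Pres1`) is the plain operad for pointed magmas — the free symmetric
operad on one arity-0 generator `i₁` and one arity-2 generator `h₁`, equivalently the
symmetrisation of the free plain operad on that collection — and the second slice
(presented by `W3Pres2`) is the plain operad for 7-pointed double magmas — the free
symmetric operad on the seven arity-0 generators `i₂, l₂, l₂′, r₂, r₂′, a₂, a₂′` and the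
two arity-2 generators `h₂, v₂`. -/
theorem slices_of_W3 :
    (∀ (A : SymmetricOperad.{u}) (ι : ∀ x : W3Gen1.{u}, A.ops (W3Ar1 x)),
      A.IsPresentedBy ι W3Pres1 →
        A.IsFreeOn ι ∧
          ∃ (M : PlainOperad.{u}) (κ : ∀ x : W3Gen1.{u}, M.ops (W3Ar1 x)),
            M.IsFreeOn κ ∧ IsSymmetrisation A M) ∧
    (∀ (A : SymmetricOperad.{u}) (ι : ∀ x : W3Gen2.{u}, A.ops (W3Ar2 x)),
      A.IsPresentedBy ι W3Pres2 →
        A.IsFreeOn ι ∧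
          ∃ (M : PlainOperad.{u}) (κ : ∀ x : W3Gen2.{u}, M.ops (W3Ar2 x)),
            M.IsFreeOn κ ∧ IsSymmetrisation A M) := by
  constructor
  · intro A ι hp
    have hfree : A.IsFreeOn ι := fun B κ => hp.2 B κ fun r => r.elim
    exact ⟨hfree, W3aux.M W3Gen1 W3Ar1, W3aux.genM _ _, W3aux.M_isFreeOn _ _,
      W3aux.isSymmetrisation_of_free A ι hfree⟩
  · intro A ι hp
    have hfree : A.IsFreeOn ι := fun B κ => hp.2 B κ fun r => r.elim
    exact ⟨hfree, W3aux.M W3Gen2 W3Ar2, W3aux.genM _ _, W3aux.M_isFreeOn _ _,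
      W3aux.isSymmetrisation_of_free A ι hfree⟩
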